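/- Let n ≥ 1, and let C₁, L, d > 0. There exists a natural number K = K(n, C₁, L, d) such that the following holds: for every ε ∈ (0, 1) and every nonnegative function f : B_1 → ℝ on the unit ball B_1 ⊂ ℝⁿ that is Lipschitz continuous with Lipschitz constant at most L/ε and satisfies ∫_{B_1} f(y) dy ≤ C₁ εⁿ, the set {y ∈ B_1 : f(y) > d} can be covered by at most K balls of radius ε. -/

import Mathlib

/-!
Near a point where `f > d`, the Lipschitz bound `L / ε` keeps `f ≥ d / 2` on a ball of radius
`≍ ε` that can be placed inside the unit ball, so each such point carries mass `≳ εⁿ` of `f`.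
Since `∫ f ≤ C₁ εⁿ`, the number of `ε / 2`-separated points of `{f > d}` is bounded independently
of `ε`, and a maximal separated family of them is the required cover.
-/

open MeasureTheory Filter

/-- The Laplacian of a scalar function on `ℝⁿ`, as the sum of second partial
derivatives in the coordinate directions. -/
noncomputable def lapComp {n : ℕ} (f : EuclideanSpace ℝ (Fin n) → ℝ)
    (x : EuclideanSpace ℝ (Fin n)) : ℝ :=
  ∑ j : Fin n,
    iteratedFDeriv ℝ 2 f x ![EuclideanSpace.single j 1, EuclideanSpace.single j 1]

/-- `|∇u|² = Σ_{k,j} (∂u_k/∂x_j)²` for a map `u : ℝⁿ → ℝ^m`. -/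
noncomputable def gradSq {n m : ℕ}
    (u : EuclideanSpace ℝ (Fin n) → EuclideanSpace ℝ (Fin m))
    (x : EuclideanSpace ℝ (Fin n)) : ℝ :=
  ∑ k : Fin m, ∑ j : Fin n, (fderiv ℝ u x (EuclideanSpace.single j 1) k) ^ 2

/-- `u` is a `C²` solution of the system `Δu = ∇W(u)` on `ℝⁿ`,
i.e. `Δu_k = ∂W/∂u_k (u)` for each `k`. -/
def IsSolution {n m : ℕ} (W : EuclideanSpace ℝ (Fin m) → ℝ)
    (u : EuclideanSpace ℝ (Fin n) → EuclideanSpace ℝ (Fin m)) : Prop :=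
  ContDiff ℝ 2 u ∧
    ∀ (x : EuclideanSpace ℝ (Fin n)) (k : Fin m),
      lapComp (fun y => u y k) x = fderiv ℝ W (u x) (EuclideanSpace.single k 1)

/-- `u` is a globally minimizing solution of `Δu = ∇W(u)` on `ℝⁿ`: it is a `C²`
solution and for every bounded open set `Ω` and every `C¹` map `v` agreeing with
`u` outside `Ω`, the energy of `u` on `Ω` does not exceed that of `v`. -/
def IsGlobalMinimizer {n m : ℕ} (W : EuclideanSpace ℝ (Fin m) → ℝ)
    (u : EuclideanSpace ℝ (Fin n) → EuclideanSpace ℝ (Fin m)) : Prop :=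
  IsSolution W u ∧
    ∀ Ω : Set (EuclideanSpace ℝ (Fin n)), IsOpen Ω → Bornology.IsBounded Ω →
      ∀ v : EuclideanSpace ℝ (Fin n) → EuclideanSpace ℝ (Fin m),
        ContDiff ℝ 1 v → (∀ x, x ∉ Ω → v x = u x) →
        (∫ x in Ω, ((1 : ℝ) / 2 * gradSq u x + W (u x))) ≤
          ∫ x in Ω, ((1 : ℝ) / 2 * gradSq v x + W (v x))

open Metric Set Module
open scoped NNReal ENNReal

theorem Set.exists_fin_subset_range_of_encard_le {α : Type*} [Nonempty α] {s : Set α} {K : ℕ}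
    (h : s.encard ≤ K) : ∃ c : Fin K → α, s ⊆ range c := by
  obtain ⟨hfin, hcard⟩ := encard_le_coe_iff_finite_ncard_le.1 h
  obtain ⟨m, f, rfl⟩ := hfin.fin_embedding
  have hm : m ≤ K := by simpa [ncard_range_of_injective f.injective] using hcard
  refine ⟨fun i => if hi : (i : ℕ) < m then f ⟨i, hi⟩ else Classical.arbitrary α, ?_⟩
  rintro _ ⟨j, rfl⟩
  exact ⟨⟨j, j.2.trans_le hm⟩, by simp⟩

namespace Metric

theorem packingNumber_le_of_forall_finset_card_le {X : Type*} [PseudoEMetricSpace X]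
    {A : Set X} {δ : ℝ≥0} {K : ℕ}
    (h : ∀ T : Finset X, ↑T ⊆ A → IsSeparated δ (T : Set X) → T.card ≤ K) :
    packingNumber δ A ≤ K := by
  refine iSup₂_le fun C hCA => iSup_le fun hC => ?_
  by_contra! hlt
  obtain ⟨T, hTC, hTcard⟩ := exists_subset_encard_eq (Order.add_one_le_of_lt hlt)
  have hTfin : T.Finite := finite_of_encard_eq_coe hTcard
  have hle := h hTfin.toFinset (by simpa using hTC.trans hCA) (by simpa using hC.subset hTC)
  rw [hTfin.encard_eq_coe_toFinset_card] at hTcard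
  have : hTfin.toFinset.card = K + 1 := by exact_mod_cast hTcard
  omega

theorem exists_fin_cover_closedBall_of_packingNumber_le {X : Type*} [PseudoMetricSpace X]
    [Nonempty X] {A : Set X} {δ : ℝ≥0} {K : ℕ} (h : packingNumber δ A ≤ K) :
    ∃ c : Fin K → X, A ⊆ ⋃ i, closedBall (c i) δ := by
  have hcov : coveringNumber δ A ≤ K := (coveringNumber_le_packingNumber δ A).trans h
  have hfin : coveringNumber δ A ≠ ⊤ := ne_top_of_le_ne_top (by simp) hcov
  obtain ⟨c, hc⟩ := exists_fin_subset_range_of_encard_le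
    ((encard_minimalCover hfin).trans_le hcov)
  refine ⟨c, (isCover_iff_subset_iUnion_closedBall.1 (isCover_minimalCover hfin)).trans ?_⟩
  refine iUnion₂_subset fun y hy => ?_
  obtain ⟨i, rfl⟩ := hc hy
  exact subset_iUnion (fun i => closedBall (c i) δ) i

end Metric

theorem LipschitzOnWith.integrableOn_of_isBounded {X : Type*} [MetricSpace X] [ProperSpace X]
    [MeasurableSpace X] [OpensMeasurableSpace X] {μ : Measure X} [IsFiniteMeasureOnCompacts μ]
    {f : X → ℝ} {K : ℝ≥0} {s : Set X} (hf : LipschitzOnWith K f s) (hs : Bornology.IsBounded s)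
    (hsm : MeasurableSet s) : IntegrableOn f s μ := by
  obtain ⟨g, hg, hfg⟩ := hf.extend_real
  have hg_int : IntegrableOn g (closure s) μ :=
    hg.continuous.continuousOn.integrableOn_compact hs.isCompact_closure
  exact (hg_int.mono_set subset_closure).congr_fun hfg.symm hsm

theorem card_mul_le_setIntegral_of_pairwiseDisjoint {X ι : Type*} [MeasurableSpace X]
    {μ : Measure X} {f : X → ℝ} {B : Set X} (hf : IntegrableOn f B μ)
    (hf0 : 0 ≤ᵐ[μ.restrict B] f) (T : Finset ι) {U : ι → Set X}
    (hU : ∀ i ∈ T, MeasurableSet (U i)) (hUB : ∀ i ∈ T, U i ⊆ B)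
    (hdisj : (T : Set ι).PairwiseDisjoint U) {m : ℝ} (hm : ∀ i ∈ T, m ≤ ∫ x in U i, f x ∂μ) :
    T.card * m ≤ ∫ x in B, f x ∂μ :=
  calc T.card * m = ∑ i ∈ T, m := by simp
    _ ≤ ∑ i ∈ T, ∫ x in U i, f x ∂μ := Finset.sum_le_sum hm
    _ = ∫ x in ⋃ i ∈ T, U i, f x ∂μ :=
      (integral_biUnion_finset T hU hdisj fun i hi => hf.mono_set (hUB i hi)).symm
    _ ≤ ∫ x in B, f x ∂μ := setIntegral_mono_set hf hf0 (iUnion₂_subset hUB).eventuallyLE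

section UnitBall

variable {E : Type*} [NormedAddCommGroup E] [NormedSpace ℝ E]

theorem ball_one_sub_smul_subset {x : E} (hx : x ∈ ball (0 : E) 1) {r : ℝ} (hr0 : 0 ≤ r)
    (hr1 : r ≤ 1) : ball ((1 - r) • x) r ⊆ ball x (2 * r) ∩ ball 0 1 := by
  rw [mem_ball_zero_iff] at hx
  intro y hy
  rw [mem_ball, dist_eq_norm] at hy
  have hxr : r * ‖x‖ ≤ r := mul_le_of_le_one_right hr0 hx.le
  have hx1r : (1 - r) * ‖x‖ ≤ 1 - r := mul_le_of_le_one_right (by linarith) hx.le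
  constructor
  · rw [mem_ball, dist_eq_norm]
    calc ‖y - x‖ = ‖(y - (1 - r) • x) + (-r) • x‖ := by congr 1; module
      _ ≤ ‖y - (1 - r) • x‖ + r * ‖x‖ := by
        grw [norm_add_le, norm_smul, norm_neg, Real.norm_of_nonneg hr0]
      _ < 2 * r := by linarith
  · rw [mem_ball_zero_iff]
    calc ‖y‖ = ‖(y - (1 - r) • x) + (1 - r) • x‖ := by rw [sub_add_cancel]
      _ ≤ ‖y - (1 - r) • x‖ + (1 - r) * ‖x‖ := by
        grw [norm_add_le, norm_smul, Real.norm_of_nonneg (by linarith : 0 ≤ 1 - r)]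
      _ < 1 := by linarith

variable [FiniteDimensional ℝ E] [MeasurableSpace E] [BorelSpace E] (μ : Measure E)
  [μ.IsAddHaarMeasure] {f : E → ℝ} {K : ℝ≥0}

theorem LipschitzOnWith.sub_mul_le_setIntegral_ball (hf : LipschitzOnWith K f (ball 0 1))
    (hfi : IntegrableOn f (ball 0 1) μ) {x : E} (hx : x ∈ ball (0 : E) 1) {r : ℝ} (hr0 : 0 < r)
    (hr1 : r ≤ 1) :
    (f x - 2 * K * r) * (r ^ finrank ℝ E * μ.real (ball 0 1)) ≤
      ∫ y in ball ((1 - r) • x) r, f y ∂μ := by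
  have hsub := ball_one_sub_smul_subset hx hr0.le hr1
  have hvol : μ.real (ball ((1 - r) • x) r) = r ^ finrank ℝ E * μ.real (ball 0 1) := by
    simp [measureReal_def, Measure.addHaar_ball_of_pos μ _ hr0, hr0.le]
  rw [← hvol]
  refine setIntegral_ge_of_const_le_real measurableSet_ball measure_ball_lt_top.ne
    (fun y hy => ?_) (hfi.mono_set (hsub.trans inter_subset_right))
  obtain ⟨hyx, hyB⟩ := hsub hy
  have hxy : dist x y ≤ 2 * r := by rw [dist_comm]; exact (mem_ball.1 hyx).le
  calc f x - 2 * K * r = f x - K * (2 * r) := by ring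
    _ ≤ f x - K * dist x y := by gcongr
    _ ≤ f y := by linarith [hf.le_add_mul hx hyB]

theorem LipschitzOnWith.card_mul_le_setIntegral_of_isSeparated
    (hf : LipschitzOnWith K f (ball 0 1)) (hf0 : ∀ y ∈ ball (0 : E) 1, 0 ≤ f y)
    (hfi : IntegrableOn f (ball 0 1) μ) {d r : ℝ} (hr0 : 0 < r) (hr1 : r ≤ 1)
    {δ : ℝ≥0} (hδ : 4 * r ≤ δ) {T : Finset E} (hT : ↑T ⊆ {y ∈ ball (0 : E) 1 | d < f y})
    (hsep : IsSeparated δ (T : Set E)) :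
    T.card * ((d - 2 * K * r) * (r ^ finrank ℝ E * μ.real (ball 0 1))) ≤
      ∫ y in ball 0 1, f y ∂μ := by
  have hsub (x) (hx : x ∈ T) := ball_one_sub_smul_subset (hT hx).1 hr0.le hr1
  refine card_mul_le_setIntegral_of_pairwiseDisjoint hfi
    ((ae_restrict_iff' measurableSet_ball).2 (.of_forall hf0)) T
    (fun _ _ => measurableSet_ball) (fun x hx => (hsub x hx).trans inter_subset_right)
    (fun a ha b hb hab => ?_) (fun x hx => ?_)
  · have hab : (δ : ℝ) < dist a b := by
      have : (δ : ℝ≥0∞) < edist a b := hsep ha hb hab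
      rwa [edist_nndist, ENNReal.coe_lt_coe, ← NNReal.coe_lt_coe, coe_nndist] at this
    exact (ball_disjoint_ball (by linarith)).mono (hsub a ha |>.trans inter_subset_left)
      (hsub b hb |>.trans inter_subset_left)
  · refine le_trans ?_ (hf.sub_mul_le_setIntegral_ball μ hfi (hT hx).1 hr0 hr1)
    gcongr
    exact (hT hx).2.le

end UnitBall

theorem covering_of_superlevel_set_general (n : ℕ) (C₁ L d : ℝ)
    (hL : 0 < L) (hd : 0 < d) :
    ∃ K : ℕ, ∀ ε : ℝ, ε ∈ Set.Ioo (0 : ℝ) 1 →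
      ∀ f : EuclideanSpace ℝ (Fin n) → ℝ,
        (∀ y ∈ Metric.ball (0 : EuclideanSpace ℝ (Fin n)) 1, 0 ≤ f y) →
        LipschitzOnWith (Real.toNNReal (L / ε)) f
          (Metric.ball (0 : EuclideanSpace ℝ (Fin n)) 1) →
        (∫ y in Metric.ball (0 : EuclideanSpace ℝ (Fin n)) 1, f y) ≤ C₁ * ε ^ n →
        ∃ c : Fin K → EuclideanSpace ℝ (Fin n),
          {y ∈ Metric.ball (0 : EuclideanSpace ℝ (Fin n)) 1 | d < f y} ⊆
            ⋃ i, Metric.ball (c i) ε := by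
  set B := ball (0 : EuclideanSpace ℝ (Fin n)) 1
  -- `κ ε` is the radius of the mass-carrying balls: `κ ≤ 1 / 8` makes them disjoint around
  -- `ε / 2`-separated points, and `κ ≤ d / (4 L)` keeps the Lipschitz loss below `d / 2`.
  set κ := min (1 / 8) (d / (4 * L))
  have hκ0 : 0 < κ := by positivity
  have hκ8 : κ ≤ 1 / 8 := min_le_left _ _
  set c₀ := d / 2 * (κ ^ n * volume.real B)
  have hc₀ : 0 < c₀ := by
    have : 0 < volume.real B :=
      ENNReal.toReal_pos (measure_ball_pos volume 0 one_pos).ne' measure_ball_lt_top.ne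
    positivity
  refine ⟨⌈C₁ / c₀⌉₊, fun ε ⟨hε0, hε1⟩ f hf0 hf hint => ?_⟩
  have hε2 : ((ε / 2).toNNReal : ℝ) = ε / 2 := Real.coe_toNNReal _ (by positivity)
  have hfi := hf.integrableOn_of_isBounded (μ := volume) isBounded_ball measurableSet_ball
  have hLκ : 2 * (L / ε).toNNReal * (κ * ε) ≤ d / 2 := calc
    _ = 2 * L * κ := by rw [Real.coe_toNNReal _ (by positivity)]; field_simp
    _ ≤ 2 * L * (d / (4 * L)) := by gcongr; exact min_le_right _ _
    _ = d / 2 := by field_simp; ring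
  have hpack : packingNumber (ε / 2).toNNReal {y ∈ B | d < f y} ≤ ⌈C₁ / c₀⌉₊ := by
    refine packingNumber_le_of_forall_finset_card_le fun T hT hsep => ?_
    have hmass := hf.card_mul_le_setIntegral_of_isSeparated volume hf0 hfi (r := κ * ε)
      (by positivity) (by nlinarith) (by rw [hε2]; nlinarith) hT hsep
    rw [finrank_euclideanSpace_fin] at hmass
    have : (T.card : ℝ) * c₀ * ε ^ n ≤ C₁ * ε ^ n := calc
      _ = T.card * (d / 2 * ((κ * ε) ^ n * volume.real B)) := by ring
      _ ≤ _ := by gcongr; linarith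
      _ ≤ C₁ * ε ^ n := hmass.trans hint
    exact_mod_cast ((le_div_iff₀ hc₀).2 (le_of_mul_le_mul_right this (by positivity))).trans
      (Nat.le_ceil _)
  obtain ⟨c, hc⟩ := exists_fin_cover_closedBall_of_packingNumber_le hpack
  exact ⟨c, hc.trans (iUnion_mono fun i => closedBall_subset_ball (by linarith))⟩

/-- Bethuel-type covering lemma: the superlevel set `{f > d}` of a nonnegative
function on the unit ball with Lipschitz constant `L/ε` and integral at most
`C₁ εⁿ` is covered by a bounded number `K` of balls of radius `ε`. -/
theorem covering_of_superlevel_set (n : ℕ) (hn : 1 ≤ n) (C₁ L d : ℝ)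
    (hC₁ : 0 < C₁) (hL : 0 < L) (hd : 0 < d) :
    ∃ K : ℕ, ∀ ε : ℝ, ε ∈ Set.Ioo (0 : ℝ) 1 →
      ∀ f : EuclideanSpace ℝ (Fin n) → ℝ,
        (∀ y ∈ Metric.ball (0 : EuclideanSpace ℝ (Fin n)) 1, 0 ≤ f y) →
        LipschitzOnWith (Real.toNNReal (L / ε)) f
          (Metric.ball (0 : EuclideanSpace ℝ (Fin n)) 1) →
        (∫ y in Metric.ball (0 : EuclideanSpace ℝ (Fin n)) 1, f y) ≤ C₁ * ε ^ n →
        ∃ c : Fin K → EuclideanSpace ℝ (Fin n),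
          {y ∈ Metric.ball (0 : EuclideanSpace ℝ (Fin n)) 1 | d < f y} ⊆
            ⋃ i, Metric.ball (c i) ε :=
  covering_of_superlevel_set_general n C₁ L d hL hd
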